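/- arXiv:quant-ph/0412070 — 4 statements merged into one kernel-verified Lean document; each statement's English description precedes it below -/
import Mathlib

section
/- If 0 < p₀ < 1/2, 0 < p₁ < 1/2, and R < 1 − (H(p₀)+H(p₁))/2, then E(R,p₀,p₁) > 0. -/
open Real Set

/-- Binary entropy function (base 2), with `0 * log 0 = 0`. -/
noncomputable def binH (x : ℝ) : ℝ := -(x * Real.logb 2 x) - (1 - x) * Real.logb 2 (1 - x)

/-- Binary Kullback–Leibler divergence (base 2). -/
noncomputable def binD (q p : ℝ) : ℝ :=
  q * Real.logb 2 (q / p) + (1 - q) * Real.logb 2 ((1 - q) / (1 - p))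

/-- The error exponent `E(R,p₀,p₁)`:
`min_{q₀,q₁ ∈ [0,1]} [(D(q₁‖p₁)+D(q₀‖p₀))/2 + |1 − R − (H(q₀)+H(q₁))/2|⁺]`. -/
noncomputable def Eexp (R p0 p1 : ℝ) : ℝ :=
  sInf {v : ℝ | ∃ q0 ∈ Set.Icc (0:ℝ) 1, ∃ q1 ∈ Set.Icc (0:ℝ) 1,
    v = (binD q1 p1 + binD q0 p0) / 2 + max (1 - R - (binH q0 + binH q1) / 2) 0}

/-
If `q₀ ≠ p₀` or `q₁ ≠ p₁`, one of the divergences is strictly positive; at `(q₀, q₁) = (p₀, p₁)`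
the divergences vanish but the rate term equals `1 - R - (H(p₀) + H(p₁))/2 > 0`. So the objective
is positive on the compact square `[0,1]²`, where it is continuous and hence attains its infimum.
-/

open InformationTheory

/-- In this form `binD · p` is visibly nonnegative and continuous, endpoints `q = 0, 1` included. -/
lemma binD_eq_klFun (q : ℝ) {p : ℝ} (hp0 : 0 < p) (hp1 : p < 1) :
    binD q p = (p * klFun (q / p) + (1 - p) * klFun ((1 - q) / (1 - p))) / log 2 := by
  have hp1' : (1 - p) ≠ 0 := by linarith
  simp only [binD, logb, klFun_apply]
  field_simp
  ring

lemma binD_nonneg {q p : ℝ} (hq0 : 0 ≤ q) (hq1 : q ≤ 1) (hp0 : 0 < p) (hp1 : p < 1) :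
    0 ≤ binD q p := by
  rw [binD_eq_klFun q hp0 hp1]
  have h0 := klFun_nonneg (div_nonneg hq0 hp0.le)
  have h1 := klFun_nonneg (div_nonneg (sub_nonneg.2 hq1) (sub_pos.2 hp1).le)
  exact div_nonneg (add_nonneg (mul_nonneg hp0.le h0) (mul_nonneg (sub_pos.2 hp1).le h1))
    (log_pos one_lt_two).le

lemma binD_pos_of_ne {q p : ℝ} (hq0 : 0 ≤ q) (hq1 : q ≤ 1) (hp0 : 0 < p) (hp1 : p < 1)
    (hne : q ≠ p) : 0 < binD q p := by
  rw [binD_eq_klFun q hp0 hp1]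
  have hqp : q / p ≠ 1 := fun h => hne ((div_eq_one_iff_eq hp0.ne').1 h)
  have h0 : 0 < klFun (q / p) :=
    (klFun_nonneg (div_nonneg hq0 hp0.le)).lt_of_ne'
      (mt (klFun_eq_zero_iff (div_nonneg hq0 hp0.le)).1 hqp)
  have h1 := klFun_nonneg (div_nonneg (sub_nonneg.2 hq1) (sub_pos.2 hp1).le)
  exact div_pos (add_pos_of_pos_of_nonneg (mul_pos hp0 h0) (mul_nonneg (sub_pos.2 hp1).le h1))
    (log_pos one_lt_two)

lemma continuous_binD_left {p : ℝ} (hp0 : 0 < p) (hp1 : p < 1) :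
    Continuous fun q => binD q p := by
  simp_rw [binD_eq_klFun _ hp0 hp1]
  fun_prop (disch := positivity)

lemma binH_eq_binEntropy_div (x : ℝ) : binH x = binEntropy x / log 2 := by
  simp only [binH, binEntropy, logb, log_inv]
  ring

lemma continuous_binH : Continuous binH := by
  simp_rw [funext binH_eq_binEntropy_div]
  fun_prop

lemma IsCompact.sInf_image_pos {α : Type*} [TopologicalSpace α] {f : α → ℝ} {s : Set α}
    (hs : IsCompact s) (hne : s.Nonempty) (hf : ContinuousOn f s) (hpos : ∀ x ∈ s, 0 < f x) :
    0 < sInf (f '' s) := by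
  obtain ⟨x, hx, hfx⟩ := (hs.image_of_continuousOn hf).sInf_mem (hne.image f)
  exact hfx ▸ hpos x hx

noncomputable def exponentObjective (R p0 p1 : ℝ) (q : ℝ × ℝ) : ℝ :=
  (binD q.2 p1 + binD q.1 p0) / 2 + max (1 - R - (binH q.1 + binH q.2) / 2) 0

lemma Eexp_eq_sInf_image (R p0 p1 : ℝ) :
    Eexp R p0 p1 = sInf (exponentObjective R p0 p1 '' Icc 0 1 ×ˢ Icc 0 1) := by
  rw [Eexp]
  congr 1
  ext v
  constructor
  · rintro ⟨q0, h0, q1, h1, rfl⟩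
    exact ⟨(q0, q1), ⟨h0, h1⟩, rfl⟩
  · rintro ⟨⟨q0, q1⟩, ⟨h0, h1⟩, rfl⟩
    exact ⟨q0, h0, q1, h1, rfl⟩

lemma continuous_exponentObjective (R : ℝ) {p0 p1 : ℝ} (hp00 : 0 < p0) (hp01 : p0 < 1)
    (hp10 : 0 < p1) (hp11 : p1 < 1) : Continuous (exponentObjective R p0 p1) := by
  have hD0 := continuous_binD_left hp00 hp01
  have hD1 := continuous_binD_left hp10 hp11
  have hH := continuous_binH
  unfold exponentObjective
  fun_prop

lemma exponentObjective_pos {R p0 p1 : ℝ} (hp00 : 0 < p0) (hp01 : p0 < 1)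
    (hp10 : 0 < p1) (hp11 : p1 < 1) (hR : R < 1 - (binH p0 + binH p1) / 2)
    {q0 q1 : ℝ} (hq00 : 0 ≤ q0) (hq01 : q0 ≤ 1) (hq10 : 0 ≤ q1) (hq11 : q1 ≤ 1) :
    0 < exponentObjective R p0 p1 (q0, q1) := by
  have hD0 := binD_nonneg hq00 hq01 hp00 hp01
  have hD1 := binD_nonneg hq10 hq11 hp10 hp11
  have hmax := le_max_right (1 - R - (binH q0 + binH q1) / 2) 0
  unfold exponentObjective
  by_cases h0 : q0 = p0
  · by_cases h1 : q1 = p1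
    · subst h0 h1
      have := le_max_left (1 - R - (binH q0 + binH q1) / 2) 0
      linarith
    · linarith [binD_pos_of_ne hq10 hq11 hp10 hp11 h1]
  · linarith [binD_pos_of_ne hq00 hq01 hp00 hp01 h0]

theorem stmt1_general (p0 p1 R : ℝ) (hp00 : 0 < p0) (hp01 : p0 < 1/2)
    (hp10 : 0 < p1) (hp11 : p1 < 1/2)
    (hR : R < 1 - (binH p0 + binH p1) / 2) :
    0 < Eexp R p0 p1 := by
  have hp01' : p0 < 1 := by linarith
  have hp11' : p1 < 1 := by linarith
  rw [Eexp_eq_sInf_image]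
  exact (isCompact_Icc.prod isCompact_Icc).sInf_image_pos
    ((nonempty_Icc.2 zero_le_one).prod (nonempty_Icc.2 zero_le_one))
    (continuous_exponentObjective R hp00 hp01' hp10 hp11').continuousOn
    fun _ ⟨⟨hq00, hq01⟩, ⟨hq10, hq11⟩⟩ =>
      exponentObjective_pos hp00 hp01' hp10 hp11' hR hq00 hq01 hq10 hq11

/-- if `R < 1 − (H(p₀)+H(p₁))/2` then `E(R,p₀,p₁) > 0`. -/
theorem stmt1 (p0 p1 R : ℝ) (hp00 : 0 < p0) (hp01 : p0 < 1/2)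
    (hp10 : 0 < p1) (hp11 : p1 < 1/2) (hR0 : 0 ≤ R) (hR1 : R ≤ 1)
    (hR : R < 1 - (binH p0 + binH p1) / 2) :
    0 < Eexp R p0 p1 :=
  stmt1_general p0 p1 R hp00 hp01 hp10 hp11 hR
end

section
/- For every e ∈ 𝔽₂ⁿ, the number of subspaces C₂⊥ ∈ A_m with e ∈ C₂⊥ \ C₁⊥ is at most |A_m| · 2^{−n(1−R)}. -/
open Real Set

/-- The set `A_m`: linear subspaces of `𝔽₂ⁿ` of dimension `s = r + m` containing `C₁⊥`. -/
def Am {n : ℕ} (C1perp : Submodule (ZMod 2) (Fin n → ZMod 2)) (s : ℕ) :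
    Set (Submodule (ZMod 2) (Fin n → ZMod 2)) :=
  {C | Module.finrank (ZMod 2) C = s ∧ C1perp ≤ C}

section aux

variable {n : ℕ}

abbrev V (n : ℕ) := Fin n → ZMod 2

noncomputable instance : Fintype (Submodule (ZMod 2) (V n)) := by
  have : Finite (Submodule (ZMod 2) (V n)) :=
    Finite.of_injective (fun p => (p : Set (V n))) SetLike.coe_injective
  exact Fintype.ofFinite _

lemma card_submodule (p : Submodule (ZMod 2) (V n)) :
    Nat.card p = 2 ^ Module.finrank (ZMod 2) p := by
  have : Fintype p := Fintype.ofFinite p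
  rw [Nat.card_eq_fintype_card, Module.card_eq_pow_finrank (K := ZMod 2), ZMod.card]

lemma zmod2_cases (x : ZMod 2) (h : x ≠ 0) : x = 1 := by
  revert h; revert x; decide

end aux

theorem key_count {n s : ℕ} (C1 : Submodule (ZMod 2) (V n))
    (hs1 : 1 ≤ s) (hsn : s ≤ n) (e : V n) (he : e ∉ C1) :
    ({C ∈ Am C1 s | e ∈ C}).ncard * 2 ^ (n - s) ≤ (Am C1 s).ncard := by
  classical
  -- a functional vanishing on C1 with f e = 1
  obtain ⟨f, hfe, hfC⟩ := Submodule.exists_dual_map_eq_bot_of_notMem he inferInstance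
  have hfe1 : f e = 1 := zmod2_cases _ hfe
  have hfC0 : ∀ x ∈ C1, f x = 0 := by
    intro x hx
    have : f x ∈ C1.map f := Submodule.mem_map_of_mem hx
    rw [hfC] at this
    exact (Submodule.mem_bot (ZMod 2)).1 this
  -- transvection maps
  set L : V n → (V n →ₗ[ZMod 2] V n) := fun t => LinearMap.id + f.smulRight t with hL
  have hLapp : ∀ t x, L t x = x + f x • t := by intro t x; simp [hL]
  have hadd_self : ∀ x : V n, x + x = 0 := by
    intro x; have : (2 : ZMod 2) • x = 0 := by
      rw [show (2 : ZMod 2) = 0 by decide, zero_smul]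
    simpa [two_smul] using this
  have hLL : ∀ t, f t = 0 → ∀ x, L t (L t x) = x := by
    intro t ht x
    simp only [hLapp, map_add, map_smul, ht, smul_eq_mul, mul_zero, smul_zero, add_zero]
    rw [add_assoc, ← add_smul, CharTwo.add_self_eq_zero, zero_smul, add_zero]
  -- the equivalence
  have hG : ∀ t, f t = 0 → ∃ G : (V n) ≃ₗ[ZMod 2] (V n), ∀ x, G x = L t x := by
    intro t ht
    exact ⟨LinearEquiv.ofLinear (L t) (L t)
      (LinearMap.ext fun x => by simpa using hLL t ht x)
      (LinearMap.ext fun x => by simpa using hLL t ht x), fun x => rfl⟩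
  have hmapmap : ∀ t, f t = 0 → ∀ C : Submodule (ZMod 2) (V n),
      Submodule.map (L t) (Submodule.map (L t) C) = C := by
    intro t ht C
    rw [← Submodule.map_comp]
    have : (L t).comp (L t) = LinearMap.id := LinearMap.ext fun x => by simpa using hLL t ht x
    rw [this, Submodule.map_id]
  have hfrk : ∀ t, f t = 0 → ∀ C : Submodule (ZMod 2) (V n),
      Module.finrank (ZMod 2) (Submodule.map (L t) C) = Module.finrank (ZMod 2) C := by
    intro t ht C
    obtain ⟨G, hGx⟩ := hG t ht
    have hGL : (G : V n →ₗ[ZMod 2] V n) = L t := LinearMap.ext fun x => hGx x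
    rw [← hGL]
    exact LinearEquiv.finrank_map_eq G C
  -- Finsets
  let A : Finset (Submodule (ZMod 2) (V n)) := Finset.univ.filter (· ∈ Am C1 s)
  let S : Finset (Submodule (ZMod 2) (V n)) :=
    Finset.univ.filter (fun C => C ∈ Am C1 s ∧ e ∈ C)
  let K : Finset (V n) := Finset.univ.filter (fun t => f t = 0)
  have hAcard : (Am C1 s).ncard = A.card := by
    rw [Set.ncard_eq_toFinset_card']
    congr 1
    ext C
    simp [A, Set.mem_toFinset]
  have hScard : ({C ∈ Am C1 s | e ∈ C}).ncard = S.card := by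
    rw [Set.ncard_eq_toFinset_card']
    congr 1
    ext C
    simp [S, Set.mem_toFinset]
  -- card of K
  have hKcard : K.card = 2 ^ (n - 1) := by
    have h1 : K = Set.toFinset (LinearMap.ker f : Set (V n)) := by
      ext t; simp [K, LinearMap.mem_ker]
    have hker : Module.finrank (ZMod 2) (LinearMap.ker f) = n - 1 := by
      have hsurj : Function.Surjective f := by
        intro c
        exact ⟨c • e, by simp [hfe1]⟩
      have h2 := LinearMap.finrank_range_add_finrank_ker f
      rw [LinearMap.range_eq_top.2 hsurj] at h2
      have h3 : Module.finrank (ZMod 2) (⊤ : Submodule (ZMod 2) (ZMod 2)) = 1 := by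
        simpa using Module.finrank_self (ZMod 2)
      have h4 : Module.finrank (ZMod 2) (V n) = n := by
        simpa using Module.finrank_pi (ZMod 2) (η := Fin n)
      omega
    have := card_submodule (LinearMap.ker f)
    rw [h1, Set.toFinset_card, ← Nat.card_eq_fintype_card]
    rw [show Nat.card (LinearMap.ker f : Set (V n)) = Nat.card (LinearMap.ker f) from rfl]
    rw [this, hker]
  -- the map lands in A
  have hmaps : ∀ p ∈ S ×ˢ K, Submodule.map (L p.2) p.1 ∈ A := by
    rintro ⟨C, t⟩ hp
    simp only [Finset.mem_product, Finset.mem_filter, Finset.mem_univ, true_and, S, K] at hp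
    obtain ⟨⟨⟨hCs, hC1⟩, heC⟩, ht⟩ := hp
    simp only [Finset.mem_filter, Finset.mem_univ, true_and, A]
    constructor
    · rw [hfrk t ht C]; exact hCs
    · intro x hx
      have hxC : x ∈ C := hC1 hx
      refine ⟨x, hxC, ?_⟩
      rw [hLapp, hfC0 x hx, zero_smul, add_zero]
  -- fiber bound
  have hfib : ∀ C'' ∈ A,
      ((S ×ˢ K).filter (fun p => Submodule.map (L p.2) p.1 = C'')).card ≤ 2 ^ (s - 1) := by
    intro C'' hC''
    simp only [Finset.mem_filter, Finset.mem_univ, true_and, A] at hC''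
    obtain ⟨hC''s, _⟩ := hC''
    set F := (S ×ˢ K).filter (fun p => Submodule.map (L p.2) p.1 = C'') with hF
    rcases Finset.eq_empty_or_nonempty F with hFe | ⟨⟨C0, t0⟩, hp0⟩
    · simp [hFe]
    have hp0' := hp0
    simp only [hF, Finset.mem_filter, Finset.mem_product, Finset.mem_univ, true_and, S, K] at hp0'
    obtain ⟨⟨⟨⟨hC0s, hC01⟩, heC0⟩, ht0⟩, hmap0⟩ := hp0'
    have het0 : e + t0 ∈ C'' := by
      rw [← hmap0]
      exact ⟨e, heC0, by rw [hLapp, hfe1, one_smul]⟩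
    -- facts about members of F
    have hmem : ∀ p ∈ F, e + p.2 ∈ C'' ∧ f p.2 = 0 ∧ p.1 = Submodule.map (L p.2) C'' := by
      rintro ⟨C, t⟩ hp
      simp only [hF, Finset.mem_filter, Finset.mem_product, Finset.mem_univ, true_and, S, K] at hp
      obtain ⟨⟨⟨⟨hCs, hC1⟩, heC⟩, ht⟩, hmap⟩ := hp
      refine ⟨?_, ht, ?_⟩
      · rw [← hmap]
        exact ⟨e, heC, by rw [hLapp, hfe1, one_smul]⟩
      · rw [← hmap, hmapmap t ht]
    -- the target finset
    let T : Finset (V n) := Finset.univ.filter (fun x => x ∈ C'' ∧ f x = 0)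
    have hinj : F.card ≤ T.card := by
      apply Finset.card_le_card_of_injOn (fun p => p.2 + t0)
      · rintro ⟨C, t⟩ hp
        obtain ⟨het, ht, _⟩ := hmem _ hp
        simp only [T, Finset.mem_coe, Finset.mem_filter, Finset.mem_univ, true_and]
        constructor
        · have := C''.add_mem het het0
          have harr : e + t + (e + t0) = t + t0 := by
            rw [show e + t + (e + t0) = e + e + (t + t0) by ring]
            rw [hadd_self, zero_add]
          rwa [harr] at this
        · rw [map_add, ht, ht0, add_zero]
      · rintro ⟨C, t⟩ hp ⟨C', t'⟩ hp' hee
        obtain ⟨_, _, hC⟩ := hmem _ (Finset.mem_coe.mp hp)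
        obtain ⟨_, _, hC'⟩ := hmem _ (Finset.mem_coe.mp hp')
        have htt : t = t' := add_right_cancel hee
        have hC2 : C = Submodule.map (L t) C'' := hC
        have hC2' : C' = Submodule.map (L t') C'' := hC'
        rw [Prod.mk.injEq]
        exact ⟨by rw [hC2, hC2', htt], htt⟩
    -- bound card T
    have hT : T.card ≤ 2 ^ (s - 1) := by
      have hTeq : T = Set.toFinset ((C'' ⊓ LinearMap.ker f : Submodule (ZMod 2) (V n)) :
          Set (V n)) := by
        ext x
        simp [T, Submodule.mem_inf, LinearMap.mem_ker]
      have hlt : (C'' ⊓ LinearMap.ker f : Submodule (ZMod 2) (V n)) < C'' := by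
        refine lt_of_le_of_ne inf_le_left ?_
        intro hEq
        have : e + t0 ∈ (C'' ⊓ LinearMap.ker f : Submodule (ZMod 2) (V n)) := by
          rw [hEq]; exact het0
        have : f (e + t0) = 0 := this.2
        rw [map_add, hfe1, ht0, add_zero] at this
        exact one_ne_zero this
      have hfr : Module.finrank (ZMod 2) (C'' ⊓ LinearMap.ker f : Submodule (ZMod 2) (V n))
          < s := by
        rw [← hC''s]
        exact Submodule.finrank_lt_finrank_of_lt hlt
      have hcard := card_submodule (C'' ⊓ LinearMap.ker f : Submodule (ZMod 2) (V n))
      rw [hTeq, Set.toFinset_card, ← Nat.card_eq_fintype_card]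
      rw [show Nat.card ((C'' ⊓ LinearMap.ker f : Submodule (ZMod 2) (V n)) : Set (V n))
        = Nat.card (C'' ⊓ LinearMap.ker f : Submodule (ZMod 2) (V n)) from rfl, hcard]
      exact Nat.pow_le_pow_right (by norm_num) (by omega)
    exact hinj.trans hT
  -- put it together
  have hmain : S.card * 2 ^ (n - 1) ≤ A.card * 2 ^ (s - 1) := by
    have h1 := Finset.card_eq_sum_card_fiberwise hmaps
    have h2 : (S ×ˢ K).card = S.card * 2 ^ (n - 1) := by
      rw [Finset.card_product, hKcard]
    rw [h2] at h1
    calc S.card * 2 ^ (n - 1) = ∑ C'' ∈ A,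
          ((S ×ˢ K).filter (fun p => Submodule.map (L p.2) p.1 = C'')).card := h1
      _ ≤ ∑ _C'' ∈ A, 2 ^ (s - 1) := Finset.sum_le_sum hfib
      _ = A.card * 2 ^ (s - 1) := by rw [Finset.sum_const, smul_eq_mul]
  rw [hAcard, hScard]
  have hsplit : n - 1 = (n - s) + (s - 1) := by omega
  rw [hsplit, pow_add, ← mul_assoc] at hmain
  exact Nat.le_of_mul_le_mul_right hmain (by positivity)

/-- for every `e ∈ 𝔽₂ⁿ`, the number of `C₂⊥ ∈ A_m` with
`e ∈ C₂⊥ \ C₁⊥` is at most `|A_m|·2^{−n(1−R)}`. -/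
theorem stmt4 {n r m : ℕ} (hn : 0 < n) (C1perp : Submodule (ZMod 2) (Fin n → ZMod 2))
    (hr : Module.finrank (ZMod 2) C1perp = r) (hm : 1 ≤ m) (hrm : r + m ≤ n)
    (R : ℝ) (hR : R = ((r : ℝ) + m) / n) (e : Fin n → ZMod 2) :
    (({C ∈ Am C1perp (r + m) | e ∈ C ∧ e ∉ C1perp}).ncard : ℝ) ≤
      ((Am C1perp (r + m)).ncard : ℝ) * (2 : ℝ) ^ (-((n : ℝ) * (1 - R))) := by
  set k := n - (r + m) with hk
  have hexp : (2 : ℝ) ^ (-((n : ℝ) * (1 - R))) = ((2 : ℝ) ^ k)⁻¹ := by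
    have h1 : -((n : ℝ) * (1 - R)) = -(k : ℝ) := by
      rw [hR, hk]
      have hn' : (n : ℝ) ≠ 0 := Nat.cast_ne_zero.2 hn.ne'
      rw [Nat.cast_sub hrm]
      field_simp
      push_cast
      ring
    rw [h1, Real.rpow_neg (by norm_num), Real.rpow_natCast]
  rw [hexp]
  by_cases he : e ∈ C1perp
  · have hempty : {C ∈ Am C1perp (r + m) | e ∈ C ∧ e ∉ C1perp} = ∅ := by
      ext C; simp only [Set.mem_setOf_eq, Set.mem_empty_iff_false, iff_false]
      rintro ⟨_, _, h⟩; exact h he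
    rw [hempty]
    simp only [Set.ncard_empty, Nat.cast_zero]
    positivity
  · have hset : {C ∈ Am C1perp (r + m) | e ∈ C ∧ e ∉ C1perp}
        = {C ∈ Am C1perp (r + m) | e ∈ C} := by
      ext C; simp only [Set.mem_setOf_eq]; tauto
    rw [hset]
    have hkey := key_count (s := r + m) C1perp (le_trans hm (Nat.le_add_left m r)) hrm e he
    rw [← div_eq_mul_inv, le_div_iff₀ (by positivity : (0:ℝ) < (2:ℝ) ^ k)]
    exact_mod_cast hkey
end

section
/- Let 0 < p₀ < 1/2, 0 < p₁ < 1/2, set q₀* = √p₀/(√p₀ + √(1−p₀)) and q₁* = √p₁/(√p₁ + √(1−p₁)), and suppose R ∈ [0,1] satisfies (H(q₀*) + H(q₁*))/2 < 1 − R. Then E(R,p₀,p₁) = 1 − R − log₂(√p₀ + √(1−p₀)) − log₂(√p₁ + √(1−p₁)). -/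
open Real Set

lemma gibbs_aux (q t : ℝ) (hq0 : 0 < q) (hq1 : q < 1) (ht0 : 0 < t) (ht1 : t < 1) :
    0 ≤ q * Real.log (q / t) + (1 - q) * Real.log ((1 - q) / (1 - t)) := by
  have h1 : Real.log (t / q) ≤ t / q - 1 := Real.log_le_sub_one_of_pos (by positivity)
  have h2 : Real.log ((1 - t) / (1 - q)) ≤ (1 - t) / (1 - q) - 1 :=
    Real.log_le_sub_one_of_pos (by apply div_pos <;> linarith)
  have e1 : Real.log (q / t) = -Real.log (t / q) := by
    rw [← Real.log_inv]; congr 1; field_simp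
  have e2 : Real.log ((1 - q) / (1 - t)) = -Real.log ((1 - t) / (1 - q)) := by
    rw [← Real.log_inv]; congr 1
    rw [inv_div]
  have A : q * Real.log (t / q) ≤ t - q := by
    have := mul_le_mul_of_nonneg_left h1 hq0.le
    have e : q * (t / q - 1) = t - q := by
      rw [mul_sub, mul_one, mul_div_cancel₀ t hq0.ne']
    linarith
  have B : (1 - q) * Real.log ((1 - t) / (1 - q)) ≤ q - t := by
    have := mul_le_mul_of_nonneg_left h2 (by linarith : (0:ℝ) ≤ 1 - q)
    have e : (1 - q) * ((1 - t) / (1 - q) - 1) = q - t := by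
      rw [mul_sub, mul_one, mul_div_cancel₀ (1-t) (by linarith : (1:ℝ)-q ≠ 0)]; ring
    linarith
  rw [e1, e2]
  nlinarith [A, B]

lemma key_ln_aux (p q : ℝ) (hp0 : 0 < p) (hp1 : p < 1) (hq0 : 0 ≤ q) (hq1 : q ≤ 1) :
    -2 * Real.log (Real.sqrt p + Real.sqrt (1 - p)) ≤
      q * Real.log (q / p) + (1 - q) * Real.log ((1 - q) / (1 - p))
        + q * Real.log q + (1 - q) * Real.log (1 - q) := by
  set a := Real.sqrt p with ha_def
  set b := Real.sqrt (1 - p) with hb_def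
  have ha : 0 < a := Real.sqrt_pos.2 hp0
  have hb : 0 < b := Real.sqrt_pos.2 (by linarith)
  have hla : Real.log p = 2 * Real.log a := by
    rw [ha_def, Real.log_sqrt hp0.le]; ring
  have hlb : Real.log (1 - p) = 2 * Real.log b := by
    rw [hb_def, Real.log_sqrt (by linarith)]; ring
  have hlab : Real.log a ≤ Real.log (a + b) := Real.log_le_log ha (by linarith)
  have hlbb : Real.log b ≤ Real.log (a + b) := Real.log_le_log hb (by linarith)
  rcases eq_or_lt_of_le hq0 with h0 | h0
  · rw [← h0]
    simp only [zero_mul, sub_zero, one_mul, add_zero, zero_add, Real.log_one, mul_zero,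
      Real.log_zero]
    rw [Real.log_div one_ne_zero (sub_ne_zero.2 hp1.ne'), Real.log_one]
    linarith
  rcases eq_or_lt_of_le hq1 with h1 | h1
  · rw [h1]
    simp only [sub_self, zero_mul, mul_zero, add_zero, zero_add, one_mul, Real.log_zero]
    rw [Real.log_div one_ne_zero hp0.ne', Real.log_one]
    linarith
  have hs : (0:ℝ) < a + b := by linarith
  have ht0 : 0 < a / (a+b) := by positivity
  have ht1 : a / (a+b) < 1 := (div_lt_one hs).2 (by linarith)
  have hg := gibbs_aux q (a/(a+b)) h0 h1 ht0 ht1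
  have e1 : Real.log (q / (a/(a+b))) = Real.log q - Real.log a + Real.log (a+b) := by
    rw [div_div_eq_mul_div, Real.log_div (mul_pos h0 hs).ne' ha.ne',
      Real.log_mul h0.ne' hs.ne']
    ring
  have e2 : (1:ℝ) - a/(a+b) = b/(a+b) := by field_simp; ring
  have e3 : Real.log ((1-q) / (b/(a+b))) = Real.log (1-q) - Real.log b + Real.log (a+b) := by
    rw [div_div_eq_mul_div, Real.log_div (mul_pos (by linarith : (0:ℝ) < 1-q) hs).ne' hb.ne',
      Real.log_mul (by linarith : (1:ℝ)-q ≠ 0) hs.ne']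
    ring
  rw [e1, e2, e3] at hg
  have e4 : Real.log (q / p) = Real.log q - Real.log p := Real.log_div h0.ne' hp0.ne'
  have e5 : Real.log ((1-q) / (1-p)) = Real.log (1-q) - Real.log (1-p) :=
    Real.log_div (by linarith) (by linarith)
  rw [e4, e5, hla, hlb]
  nlinarith [hg]

lemma key_aux (p q : ℝ) (hp0 : 0 < p) (hp1 : p < 1) (hq0 : 0 ≤ q) (hq1 : q ≤ 1) :
    -2 * Real.logb 2 (Real.sqrt p + Real.sqrt (1 - p)) ≤ binD q p - binH q := by
  have kln := key_ln_aux p q hp0 hp1 hq0 hq1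
  have h2 : (0:ℝ) < Real.log 2 := Real.log_pos (by norm_num)
  have geq : binD q p - binH q =
      (q * Real.log (q / p) + (1 - q) * Real.log ((1 - q) / (1 - p))
        + q * Real.log q + (1 - q) * Real.log (1 - q)) / Real.log 2 := by
    unfold binD binH; simp only [Real.logb]; ring
  have leq : -2 * Real.logb 2 (Real.sqrt p + Real.sqrt (1 - p)) =
      (-2 * Real.log (Real.sqrt p + Real.sqrt (1 - p))) / Real.log 2 := by
    simp only [Real.logb]; ring
  rw [geq, leq]
  exact (div_le_div_iff_of_pos_right h2).2 kln

lemma key_eq_aux (p : ℝ) (hp0 : 0 < p) (hp1 : p < 1) :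
    binD (Real.sqrt p / (Real.sqrt p + Real.sqrt (1 - p))) p
      - binH (Real.sqrt p / (Real.sqrt p + Real.sqrt (1 - p)))
      = -2 * Real.logb 2 (Real.sqrt p + Real.sqrt (1 - p)) := by
  set a := Real.sqrt p with ha_def
  set b := Real.sqrt (1 - p) with hb_def
  have ha : 0 < a := Real.sqrt_pos.2 hp0
  have hb : 0 < b := Real.sqrt_pos.2 (by linarith)
  have hs : (0:ℝ) < a + b := by linarith
  have hla : Real.log p = 2 * Real.log a := by
    rw [ha_def, Real.log_sqrt hp0.le]; ring
  have hlb : Real.log (1 - p) = 2 * Real.log b := by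
    rw [hb_def, Real.log_sqrt (by linarith)]; ring
  have e2 : 1 - a/(a+b) = b/(a+b) := by field_simp; ring
  have l1 : Real.log ((a/(a+b))/p) = -Real.log a - Real.log (a+b) := by
    rw [Real.log_div (div_pos ha hs).ne' hp0.ne', Real.log_div ha.ne' hs.ne', hla]; ring
  have l2 : Real.log (a/(a+b)) = Real.log a - Real.log (a+b) := Real.log_div ha.ne' hs.ne'
  have l3 : Real.log ((b/(a+b))/(1-p)) = -Real.log b - Real.log (a+b) := by
    rw [Real.log_div (div_pos hb hs).ne' (by linarith : (1:ℝ)-p ≠ 0),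
      Real.log_div hb.ne' hs.ne', hlb]; ring
  have l4 : Real.log (b/(a+b)) = Real.log b - Real.log (a+b) := Real.log_div hb.ne' hs.ne'
  have h2 : Real.log 2 ≠ 0 := (Real.log_pos (by norm_num)).ne'
  unfold binD binH
  rw [e2]
  simp only [Real.logb]
  rw [l1, l2, l3, l4]
  field_simp
  ring

/-- if `(H(q₀*)+H(q₁*))/2 < 1 − R` where `qᵢ* = √pᵢ/(√pᵢ+√(1−pᵢ))`, then
`E(R,p₀,p₁) = 1 − R − log₂(√p₀+√(1−p₀)) − log₂(√p₁+√(1−p₁))`. -/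
theorem stmt10 (p0 p1 R : ℝ) (hp00 : 0 < p0) (hp01 : p0 < 1/2)
    (hp10 : 0 < p1) (hp11 : p1 < 1/2) (hR0 : 0 ≤ R) (hR1 : R ≤ 1)
    (hq : (binH (Real.sqrt p0 / (Real.sqrt p0 + Real.sqrt (1 - p0))) +
            binH (Real.sqrt p1 / (Real.sqrt p1 + Real.sqrt (1 - p1)))) / 2 < 1 - R) :
    Eexp R p0 p1 =
      1 - R - Real.logb 2 (Real.sqrt p0 + Real.sqrt (1 - p0)) -
        Real.logb 2 (Real.sqrt p1 + Real.sqrt (1 - p1)) := by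
  have hp01' : p0 < 1 := by linarith
  have hp11' : p1 < 1 := by linarith
  have ha0 : 0 < Real.sqrt p0 := Real.sqrt_pos.2 hp00
  have hb0 : 0 < Real.sqrt (1 - p0) := Real.sqrt_pos.2 (by linarith)
  have ha1 : 0 < Real.sqrt p1 := Real.sqrt_pos.2 hp10
  have hb1 : 0 < Real.sqrt (1 - p1) := Real.sqrt_pos.2 (by linarith)
  set q0 := Real.sqrt p0 / (Real.sqrt p0 + Real.sqrt (1 - p0)) with hq0_def
  set q1 := Real.sqrt p1 / (Real.sqrt p1 + Real.sqrt (1 - p1)) with hq1_def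
  have hq0m : q0 ∈ Set.Icc (0:ℝ) 1 :=
    ⟨by positivity, (div_le_one (by linarith)).2 (by linarith)⟩
  have hq1m : q1 ∈ Set.Icc (0:ℝ) 1 :=
    ⟨by positivity, (div_le_one (by linarith)).2 (by linarith)⟩
  set V := 1 - R - Real.logb 2 (Real.sqrt p0 + Real.sqrt (1 - p0)) -
      Real.logb 2 (Real.sqrt p1 + Real.sqrt (1 - p1)) with hV_def
  have he0 := key_eq_aux p0 hp00 hp01'
  have he1 := key_eq_aux p1 hp10 hp11'
  have hmem : V ∈ {v : ℝ | ∃ q0 ∈ Set.Icc (0:ℝ) 1, ∃ q1 ∈ Set.Icc (0:ℝ) 1,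
      v = (binD q1 p1 + binD q0 p0) / 2 + max (1 - R - (binH q0 + binH q1) / 2) 0} := by
    refine ⟨q0, hq0m, q1, hq1m, ?_⟩
    rw [max_eq_left (by linarith)]
    rw [hV_def]
    linarith [he0, he1]
  have hlb : ∀ v ∈ {v : ℝ | ∃ q0 ∈ Set.Icc (0:ℝ) 1, ∃ q1 ∈ Set.Icc (0:ℝ) 1,
      v = (binD q1 p1 + binD q0 p0) / 2 + max (1 - R - (binH q0 + binH q1) / 2) 0}, V ≤ v := by
    rintro v ⟨r0, hr0, r1, hr1, rfl⟩
    have k0 := key_aux p0 r0 hp00 hp01' hr0.1 hr0.2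
    have k1 := key_aux p1 r1 hp10 hp11' hr1.1 hr1.2
    have hmax : 1 - R - (binH r0 + binH r1) / 2 ≤
        max (1 - R - (binH r0 + binH r1) / 2) 0 := le_max_left _ _
    rw [hV_def]
    linarith
  unfold Eexp
  exact le_antisymm (csInf_le ⟨V, hlb⟩ hmem) (le_csInf ⟨V, hmem⟩ hlb)
end

section
/- Let 0 < p₀ < 1/2, 0 < p₁ < 1/2, β > 0, and define q̂₀ = p₀^β/(p₀^β + (1−p₀)^β) and q̂₁ = p₁^β/(p₁^β + (1−p₁)^β). Suppose R satisfies (H(q̂₀)+H(q̂₁))/2 = 1 − R. Then for every (q₀,q₁) ∈ [0,1]² with (H(q₀)+H(q₁))/2 = 1 − R, one has (D(q₀‖p₀) + D(q₁‖p₁))/2 ≥ (D(q̂₀‖p₀) + D(q̂₁‖p₁))/2; that is, (q̂₀,q̂₁) minimizes (D(q₀‖p₀)+D(q₁‖p₁))/2 over the constraint curve (H(q₀)+H(q₁))/2 = 1 − R. -/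
open Real Set

private lemma mul_log_div (x c : ℝ) (hx : 0 ≤ x) (hc : 0 < c) :
    x * Real.log (x / c) = x * Real.log x - x * Real.log c := by
  rcases hx.eq_or_lt with h | h
  · simp [← h]
  · rw [Real.log_div h.ne' hc.ne']; ring

private lemma log_tangent (x y : ℝ) (hx : 0 ≤ x) (hy : 0 < y) :
    x * Real.log y - x * Real.log x ≤ y - x := by
  rcases hx.eq_or_lt with h | h
  · simp [← h, hy.le]
  · have h1 : 0 < y / x := div_pos hy h
    have h2 := Real.log_le_sub_one_of_pos h1
    rw [Real.log_div hy.ne' h.ne'] at h2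
    have h3 : x * (Real.log y - Real.log x) ≤ x * (y / x - 1) :=
      mul_le_mul_of_nonneg_left h2 h.le
    have h4 : x * (y / x - 1) = y - x := by field_simp
    nlinarith [h3, h4]

private lemma coord (p β q : ℝ) (hp0 : 0 < p) (hp1 : p < 1) (hβ : 0 < β)
    (hq0 : 0 ≤ q) (hq1 : q ≤ 1) :
    binD (p ^ β / (p ^ β + (1 - p) ^ β)) p
        - (1 / β - 1) * binH (p ^ β / (p ^ β + (1 - p) ^ β))
      ≤ binD q p - (1 / β - 1) * binH q := by
  set t : ℝ := p ^ β / (p ^ β + (1 - p) ^ β) with ht_def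
  have h1p : (0:ℝ) < 1 - p := by linarith
  have ha : 0 < p ^ β := Real.rpow_pos_of_pos hp0 β
  have hb : 0 < (1 - p) ^ β := Real.rpow_pos_of_pos h1p β
  have hs : 0 < p ^ β + (1 - p) ^ β := by linarith
  have ht0 : 0 < t := div_pos ha hs
  have ht1 : t < 1 := by
    rw [ht_def, div_lt_one hs]; linarith
  have h1t : 1 - t = (1 - p) ^ β / (p ^ β + (1 - p) ^ β) := by
    rw [ht_def]; field_simp; ring
  have h1t0 : 0 < 1 - t := by linarith
  have hLt : Real.log t = β * Real.log p - Real.log (p ^ β + (1 - p) ^ β) := by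
    rw [ht_def, Real.log_div ha.ne' hs.ne', Real.log_rpow hp0]
  have hL1t : Real.log (1 - t) = β * Real.log (1 - p) - Real.log (p ^ β + (1 - p) ^ β) := by
    rw [h1t, Real.log_div hb.ne' hs.ne', Real.log_rpow h1p]
  have hrel : Real.log (1 - t) = Real.log t + β * (Real.log (1 - p) - Real.log p) := by
    rw [hLt, hL1t]; ring
  have hl2 : (0:ℝ) < Real.log 2 := Real.log_pos (by norm_num)
  have e1 := mul_log_div q p hq0 hp0
  have e2 := mul_log_div (1 - q) (1 - p) (by linarith) h1p
  have e3 := mul_log_div t p ht0.le hp0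
  have e4 := mul_log_div (1 - t) (1 - p) h1t0.le h1p
  have hDq : binD q p = (q * Real.log q - q * Real.log p
      + ((1 - q) * Real.log (1 - q) - (1 - q) * Real.log (1 - p))) / Real.log 2 := by
    simp only [binD, Real.logb]
    linear_combination (e1 + e2) / Real.log 2
  have hDt : binD t p = (t * Real.log t - t * Real.log p
      + ((1 - t) * Real.log (1 - t) - (1 - t) * Real.log (1 - p))) / Real.log 2 := by
    simp only [binD, Real.logb]
    linear_combination (e3 + e4) / Real.log 2
  have hHq : binH q = (-(q * Real.log q) - (1 - q) * Real.log (1 - q)) / Real.log 2 := by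
    simp only [binH, Real.logb]; ring
  have hHt : binH t = (-(t * Real.log t) - (1 - t) * Real.log (1 - t)) / Real.log 2 := by
    simp only [binH, Real.logb]; ring
  -- Gibbs' inequality: the nonnegative quantity G = (log 2) · D(q ‖ t)
  set G : ℝ := q * Real.log q - q * Real.log t
      + ((1 - q) * Real.log (1 - q) - (1 - q) * Real.log (1 - t)) with hG_def
  have hG : 0 ≤ G := by
    have g1 := log_tangent q t hq0 ht0
    have g2 := log_tangent (1 - q) (1 - t) (by linarith) h1t0
    rw [hG_def]; linarith
  have key : (binD q p - (1 / β - 1) * binH q)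
      - (binD t p - (1 / β - 1) * binH t) = G / (β * Real.log 2) := by
    rw [hDq, hDt, hHq, hHt, hG_def, hrel]
    field_simp
    ring
  have hpos : 0 ≤ G / (β * Real.log 2) := div_nonneg hG (by positivity)
  linarith [key, hpos]

/-- with `q̂ᵢ = pᵢ^β/(pᵢ^β+(1−pᵢ)^β)` and `(H(q̂₀)+H(q̂₁))/2 = 1 − R`,
the point `(q̂₀,q̂₁)` minimizes `(D(q₀‖p₀)+D(q₁‖p₁))/2` over the constraint curve
`(H(q₀)+H(q₁))/2 = 1 − R` in `[0,1]²`. -/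
theorem stmt14 (p0 p1 β R : ℝ) (hp00 : 0 < p0) (hp01 : p0 < 1/2)
    (hp10 : 0 < p1) (hp11 : p1 < 1/2) (hβ : 0 < β)
    (hR : (binH (p0 ^ β / (p0 ^ β + (1 - p0) ^ β)) +
            binH (p1 ^ β / (p1 ^ β + (1 - p1) ^ β))) / 2 = 1 - R) :
    ∀ q0 ∈ Set.Icc (0:ℝ) 1, ∀ q1 ∈ Set.Icc (0:ℝ) 1,
      (binH q0 + binH q1) / 2 = 1 - R →
        (binD (p0 ^ β / (p0 ^ β + (1 - p0) ^ β)) p0 +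
            binD (p1 ^ β / (p1 ^ β + (1 - p1) ^ β)) p1) / 2 ≤
          (binD q0 p0 + binD q1 p1) / 2 := by
  intro q0 hq0 q1 hq1 hcon
  have c0 := coord p0 β q0 hp00 (by linarith) hβ hq0.1 hq0.2
  have c1 := coord p1 β q1 hp10 (by linarith) hβ hq1.1 hq1.2
  have hsum : binH (p0 ^ β / (p0 ^ β + (1 - p0) ^ β))
      + binH (p1 ^ β / (p1 ^ β + (1 - p1) ^ β)) = binH q0 + binH q1 := by linarith
  have h2 : (1 / β - 1) * binH (p0 ^ β / (p0 ^ β + (1 - p0) ^ β))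
      + (1 / β - 1) * binH (p1 ^ β / (p1 ^ β + (1 - p1) ^ β))
      = (1 / β - 1) * binH q0 + (1 / β - 1) * binH q1 := by
    linear_combination (1 / β - 1) * hsum
  linarith [c0, c1, h2]
end
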